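/- The map Φ(k, σ) = (4ι₁(k)/σ, (8/(3σ³))(k²ι₁(k) + ι₂(k))) is a bijection from (0, k₀) × (0, +∞) onto (0, +∞) × (0, +∞). -/

import Mathlib

/-!
Writing `Φ(k, σ) = (x, y)`, the quotient `y / x³ = ρ(k) / 24`, where `ρ = k²/ι₁² + ι₂/ι₁³`,
does not depend on `σ`, and `σ = 4ι₁(k)/x` once `k` is known; so it suffices that `ρ` maps
`(0, k₀)` bijectively onto `(0, ∞)`. The integrands `2√u − 1/√u` of `ι₁` and `1/√u − √u` of `ι₂`
are monotone in `u = 1 − k² sin² t`, so `ι₁` decreases strictly to `ι₁(k₀) = 0` and `ι₂`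
increases strictly from `ι₂(0) = 0`. Hence `ρ` is continuous and strictly increasing on
`(0, k₀)`, with `ρ(0⁺) = 0` and `ρ(k₀⁻) = ∞`.
-/

open Real Set Filter Topology

/-- Complete elliptic integral of the first kind. -/
noncomputable def K (k : ℝ) : ℝ :=
  ∫ t in (0:ℝ)..(π/2), 1 / Real.sqrt (1 - k^2 * Real.sin t ^ 2)

/-- Complete elliptic integral of the second kind. -/
noncomputable def E (k : ℝ) : ℝ :=
  ∫ t in (0:ℝ)..(π/2), Real.sqrt (1 - k^2 * Real.sin t ^ 2)

noncomputable def ι₁ (k : ℝ) : ℝ := 2 * E k - K k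

noncomputable def ι₂ (k : ℝ) : ℝ := K k - E k

noncomputable def ellipticIntegral (h : ℝ → ℝ) (k : ℝ) : ℝ :=
  ∫ t in (0:ℝ)..(π/2), h (1 - k^2 * Real.sin t ^ 2)

lemma one_sub_sq_mul_sin_sq_pos {k : ℝ} (hk : k^2 < 1) (t : ℝ) :
    0 < 1 - k^2 * Real.sin t ^ 2 := by
  nlinarith [Real.sin_sq_le_one t, sq_nonneg k]

lemma sq_lt_one_of_mem_Ico {k : ℝ} (hk : k ∈ Ico 0 1) : k^2 < 1 := by
  nlinarith [hk.1, hk.2]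

section ellipticIntegral

variable {h : ℝ → ℝ} (hc : ContinuousOn h (Ioi 0))
include hc

lemma continuous_integrand_ellipticIntegral {k : ℝ} (hk : k^2 < 1) :
    Continuous fun t => h (1 - k^2 * Real.sin t ^ 2) :=
  hc.comp_continuous (by fun_prop) (one_sub_sq_mul_sin_sq_pos hk)

lemma ellipticIntegral_sub {g : ℝ → ℝ} (hg : ContinuousOn g (Ioi 0)) {k : ℝ}
    (hk : k^2 < 1) :
    ellipticIntegral (fun u => h u - g u) k = ellipticIntegral h k - ellipticIntegral g k :=
  intervalIntegral.integral_sub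
    ((continuous_integrand_ellipticIntegral hc hk).intervalIntegrable _ _)
    ((continuous_integrand_ellipticIntegral hg hk).intervalIntegrable _ _)

lemma continuousOn_ellipticIntegral : ContinuousOn (ellipticIntegral h) (Ioo (-1) 1) := by
  rw [continuousOn_iff_continuous_domRestrict]
  refine intervalIntegral.continuous_parametric_intervalIntegral_of_continuous'
    (f := fun (k : Ioo (-1 : ℝ) 1) t => h (1 - (k : ℝ)^2 * Real.sin t ^ 2)) ?_ _ _
  refine hc.comp_continuous (by fun_prop) fun p => one_sub_sq_mul_sin_sq_pos ?_ _
  exact sq_lt_one_iff_abs_lt_one _ |>.2 (abs_lt.2 p.1.2)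

lemma strictAntiOn_ellipticIntegral (hm : StrictMonoOn h (Ioi 0)) :
    StrictAntiOn (ellipticIntegral h) (Ico 0 1) := by
  intro a ha b hb hab
  have ha2 := sq_lt_one_of_mem_Ico ha
  have hb2 := sq_lt_one_of_mem_Ico hb
  have hab2 : a^2 < b^2 := by nlinarith [ha.1]
  refine intervalIntegral.integral_lt_integral_of_continuousOn_of_le_of_exists_lt (by positivity)
    (continuous_integrand_ellipticIntegral hc hb2).continuousOn
    (continuous_integrand_ellipticIntegral hc ha2).continuousOn (fun t _ => ?_)
    ⟨π/2, ⟨by positivity, le_rfl⟩, hm (one_sub_sq_mul_sin_sq_pos hb2 _)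
      (one_sub_sq_mul_sin_sq_pos ha2 _) (by simpa using hab2)⟩
  refine hm.monotoneOn (one_sub_sq_mul_sin_sq_pos hb2 _) (one_sub_sq_mul_sin_sq_pos ha2 _) ?_
  nlinarith [sq_nonneg (Real.sin t)]

lemma strictMonoOn_ellipticIntegral (hm : StrictAntiOn h (Ioi 0)) :
    StrictMonoOn (ellipticIntegral h) (Ico 0 1) := by
  have := strictAntiOn_ellipticIntegral hc.neg hm.neg
  intro a ha b hb hab
  simpa [ellipticIntegral, intervalIntegral.integral_neg] using this ha hb hab

end ellipticIntegral

lemma continuousOn_one_div_sqrt : ContinuousOn (fun u => 1 / Real.sqrt u) (Ioi 0) :=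
  continuousOn_const.div Real.continuous_sqrt.continuousOn fun _ hu => (Real.sqrt_pos.2 hu).ne'

lemma strictAntiOn_one_div_sqrt : StrictAntiOn (fun u => 1 / Real.sqrt u) (Ioi 0) :=
  fun _ hu _ _ huv => one_div_lt_one_div_of_lt (Real.sqrt_pos.2 hu) (Real.sqrt_lt_sqrt hu.le huv)

lemma ι₁_eq_ellipticIntegral {k : ℝ} (hk : k^2 < 1) :
    ι₁ k = ellipticIntegral (fun u => 2 * Real.sqrt u - 1 / Real.sqrt u) k := by
  rw [ellipticIntegral_sub (h := fun u => 2 * Real.sqrt u)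
    (continuous_const.mul Real.continuous_sqrt).continuousOn continuousOn_one_div_sqrt hk,
    ellipticIntegral, intervalIntegral.integral_const_mul]
  rfl

lemma ι₂_eq_ellipticIntegral {k : ℝ} (hk : k^2 < 1) :
    ι₂ k = ellipticIntegral (fun u => 1 / Real.sqrt u - Real.sqrt u) k := by
  rw [ellipticIntegral_sub continuousOn_one_div_sqrt Real.continuous_sqrt.continuousOn hk]
  rfl

lemma continuousOn_ι₁ : ContinuousOn ι₁ (Ioo (-1) 1) := by
  have hE := continuousOn_ellipticIntegral Real.continuous_sqrt.continuousOn
  have hK := continuousOn_ellipticIntegral continuousOn_one_div_sqrt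
  exact (continuousOn_const.mul hE).sub hK

lemma continuousOn_ι₂ : ContinuousOn ι₂ (Ioo (-1) 1) :=
  (continuousOn_ellipticIntegral continuousOn_one_div_sqrt).sub
    (continuousOn_ellipticIntegral Real.continuous_sqrt.continuousOn)

lemma strictAntiOn_ι₁ : StrictAntiOn ι₁ (Ico 0 1) := by
  have hc : ContinuousOn (fun u => 2 * Real.sqrt u - 1 / Real.sqrt u) (Ioi 0) :=
    (continuousOn_const.mul Real.continuous_sqrt.continuousOn).sub continuousOn_one_div_sqrt
  have hm : StrictMonoOn (fun u => 2 * Real.sqrt u - 1 / Real.sqrt u) (Ioi 0) := by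
    intro u hu v hv huv
    have := Real.sqrt_lt_sqrt hu.le huv
    have := strictAntiOn_one_div_sqrt hu hv huv
    dsimp only
    linarith
  intro a ha b hb hab
  rw [ι₁_eq_ellipticIntegral (sq_lt_one_of_mem_Ico hb),
    ι₁_eq_ellipticIntegral (sq_lt_one_of_mem_Ico ha)]
  exact strictAntiOn_ellipticIntegral hc hm ha hb hab

lemma strictMonoOn_ι₂ : StrictMonoOn ι₂ (Ico 0 1) := by
  have hc : ContinuousOn (fun u => 1 / Real.sqrt u - Real.sqrt u) (Ioi 0) :=
    continuousOn_one_div_sqrt.sub Real.continuous_sqrt.continuousOn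
  have hm : StrictAntiOn (fun u => 1 / Real.sqrt u - Real.sqrt u) (Ioi 0) := by
    intro u hu v hv huv
    have := Real.sqrt_lt_sqrt hu.le huv
    have := strictAntiOn_one_div_sqrt hu hv huv
    dsimp only
    linarith
  intro a ha b hb hab
  rw [ι₂_eq_ellipticIntegral (sq_lt_one_of_mem_Ico hb),
    ι₂_eq_ellipticIntegral (sq_lt_one_of_mem_Ico ha)]
  exact strictMonoOn_ellipticIntegral hc hm ha hb hab

lemma ι₂_zero : ι₂ 0 = 0 := by
  simp [ι₂, K, E]

lemma ι₂_pos {k : ℝ} (hk : k ∈ Ioo 0 1) : 0 < ι₂ k :=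
  ι₂_zero ▸ strictMonoOn_ι₂ ⟨le_rfl, zero_lt_one⟩ ⟨hk.1.le, hk.2⟩ hk.1

lemma ι₁_pos {k₀ k : ℝ} (hk₀ : k₀ < 1) (hroot : ι₁ k₀ = 0) (hk : k ∈ Ico 0 k₀) :
    0 < ι₁ k :=
  hroot ▸ strictAntiOn_ι₁ ⟨hk.1, hk.2.trans hk₀⟩ ⟨hk.1.trans hk.2.le, hk₀⟩ hk.2

lemma bijOn_Ioo_Ioi_of_tendsto {f : ℝ → ℝ} {a b : ℝ} (hab : a < b)
    (hc : ContinuousOn f (Ioo a b)) (hm : StrictMonoOn f (Ioo a b))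
    (ha : Tendsto f (𝓝[>] a) (𝓝 0)) (hb : Tendsto f (𝓝[<] b) atTop) :
    BijOn f (Ioo a b) (Ioi 0) := by
  have hnonneg : ∀ x ∈ Ioo a b, 0 ≤ f x := fun x hx => by
    refine le_of_tendsto ha ?_
    filter_upwards [Ioo_mem_nhdsGT hx.1] with y hy
    exact hm.monotoneOn ⟨hy.1, hy.2.trans hx.2⟩ hx hy.2.le
  refine ⟨fun x hx => ?_, hm.injOn, fun y (hy : 0 < y) => ?_⟩
  · obtain ⟨z, hz⟩ := nonempty_Ioo.2 hx.1
    have hzab : z ∈ Ioo a b := ⟨hz.1, hz.2.trans hx.2⟩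
    exact (hnonneg z hzab).trans_lt (hm hzab hx hz.2)
  · obtain ⟨x₁, hfx₁, hx₁⟩ :=
      ((ha.eventually_lt_const hy).and (Ioo_mem_nhdsGT hab)).exists
    obtain ⟨x₂, hfx₂, hx₂⟩ := ((hb.eventually_gt_atTop y).and (Ioo_mem_nhdsLT hab)).exists
    have hx₁₂ : x₁ < x₂ := (hm.lt_iff_lt hx₁ hx₂).1 (hfx₁.trans hfx₂)
    have hsub : Icc x₁ x₂ ⊆ Ioo a b := Icc_subset_Ioo hx₁.1 hx₂.2
    obtain ⟨x, hx, rfl⟩ :=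
      intermediate_value_Icc hx₁₂.le (hc.mono hsub) ⟨hfx₁.le, hfx₂.le⟩
    exact ⟨x, hsub hx, rfl⟩

lemma bijOn_const_mul_Ioi {α : Type*} {f : α → ℝ} {s : Set α} (hf : BijOn f s (Ioi 0))
    {c : ℝ} (hc : 0 < c) : BijOn (fun x => c * f x) s (Ioi 0) := by
  have h : BijOn (c * ·) (Ioi 0) (Ioi 0) := by
    simpa [image_mul_left_Ioi hc] using
      (mul_right_injective₀ hc.ne').injOn.bijOn_image (s := Ioi (0:ℝ))
  exact h.comp hf

lemma bijOn_div_div_pow_three {α : Type*} {s : Set α} {a b : α → ℝ}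
    (ha : ∀ k ∈ s, 0 < a k) (hρ : BijOn (fun k => b k / a k ^ 3) s (Ioi 0)) :
    BijOn (fun q : α × ℝ => (a q.1 / q.2, b q.1 / q.2 ^ 3)) (s ×ˢ Ioi 0)
      (Ioi 0 ×ˢ Ioi 0) := by
  have hratio : ∀ k σ, σ ≠ 0 → a k ≠ 0 →
      (b k / σ ^ 3) / (a k / σ) ^ 3 = b k / a k ^ 3 := by
    intro k σ hσ hk
    field_simp
  refine ⟨?_, ?_, ?_⟩
  · rintro ⟨k, σ⟩ ⟨hk, hσ : 0 < σ⟩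
    have hak := ha k hk
    have hbk : 0 < b k := (div_pos_iff_of_pos_right (by positivity)).1 (hρ.mapsTo hk)
    exact ⟨div_pos hak hσ, div_pos hbk (by positivity)⟩
  · rintro ⟨k, σ⟩ ⟨hk, hσ : 0 < σ⟩ ⟨k', σ'⟩ ⟨hk', hσ' : 0 < σ'⟩ heq
    obtain ⟨h₁, h₂⟩ := Prod.mk.inj heq
    obtain rfl : k = k' := hρ.injOn hk hk' <| by
      simp only
      rw [← hratio k σ hσ.ne' (ha k hk).ne', ← hratio k' σ' hσ'.ne' (ha k' hk').ne',
        h₁, h₂]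
    have hinv : σ⁻¹ = σ'⁻¹ := mul_left_cancel₀ (ha k hk).ne' h₁
    rw [inv_injective hinv]
  · rintro ⟨x, y⟩ ⟨hx : 0 < x, hy : 0 < y⟩
    obtain ⟨k, hk, hkρ⟩ :=
      hρ.surjOn (show y / x ^ 3 ∈ Ioi 0 from div_pos hy (by positivity))
    have hak := (ha k hk).ne'
    refine ⟨(k, a k / x), ⟨hk, div_pos (ha k hk) hx⟩, Prod.ext ?_ ?_⟩
    · field_simp
    · dsimp only at hkρ ⊢
      field_simp at hkρ ⊢
      linarith

noncomputable def ellipticRatio (k : ℝ) : ℝ := k^2 / ι₁ k ^ 2 + ι₂ k / ι₁ k ^ 3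

lemma ellipticRatio_zero : ellipticRatio 0 = 0 := by
  simp [ellipticRatio, ι₂_zero]

section root

variable {k₀ : ℝ} (hk₀ : k₀ ∈ Ioo 0 1) (hroot : ι₁ k₀ = 0)
include hk₀ hroot

lemma strictMonoOn_ellipticRatio : StrictMonoOn ellipticRatio (Ioo 0 k₀) := by
  intro x hx y hy hxy
  have hx₁ : x ∈ Ico 0 1 := ⟨hx.1.le, hx.2.trans hk₀.2⟩
  have hy₁ : y ∈ Ico 0 1 := ⟨hy.1.le, hy.2.trans hk₀.2⟩
  have hιy := ι₁_pos hk₀.2 hroot (Ioo_subset_Ico_self hy)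
  have hι₁ : ι₁ y < ι₁ x := strictAntiOn_ι₁ hx₁ hy₁ hxy
  have hι₂ : ι₂ x < ι₂ y := strictMonoOn_ι₂ hx₁ hy₁ hxy
  have hι₂x := ι₂_pos ⟨hx.1, hx.2.trans hk₀.2⟩
  unfold ellipticRatio
  gcongr
  exacts [hx.1.le, hι₂x.le.trans hι₂.le]

lemma continuousOn_ellipticRatio : ContinuousOn ellipticRatio (Ico 0 k₀) := by
  have hsub : Ico 0 k₀ ⊆ Ioo (-1) 1 := fun k hk => ⟨by linarith [hk.1], hk.2.trans hk₀.2⟩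
  have hι₁ := continuousOn_ι₁.mono hsub
  have hι₂ := continuousOn_ι₂.mono hsub
  have hne : ∀ k ∈ Ico 0 k₀, ι₁ k ≠ 0 := fun k hk => (ι₁_pos hk₀.2 hroot hk).ne'
  exact ((continuousOn_pow 2).div (hι₁.pow 2) fun k hk => pow_ne_zero 2 (hne k hk)).add
    (hι₂.div (hι₁.pow 3) fun k hk => pow_ne_zero 3 (hne k hk))

lemma tendsto_ellipticRatio_nhdsGT_zero : Tendsto ellipticRatio (𝓝[>] 0) (𝓝 0) := by
  have h :=
    ((continuousOn_ellipticRatio hk₀ hroot).continuousWithinAt ⟨le_rfl, hk₀.1⟩).tendsto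
  rw [ellipticRatio_zero] at h
  exact h.mono_left <|
    nhdsWithin_le_of_mem (mem_of_superset (Ioo_mem_nhdsGT hk₀.1) Ioo_subset_Ico_self)

lemma tendsto_ellipticRatio_nhdsLT : Tendsto ellipticRatio (𝓝[<] k₀) atTop := by
  have hι₁ : Tendsto ι₁ (𝓝[<] k₀) (𝓝[>] 0) := by
    refine tendsto_nhdsWithin_iff.2 ⟨?_, ?_⟩
    · have h := (continuousOn_ι₁.continuousAt (Ioo_mem_nhds (by linarith [hk₀.1]) hk₀.2))
      exact hroot ▸ h.tendsto.mono_left nhdsWithin_le_nhds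
    · filter_upwards [Ioo_mem_nhdsLT hk₀.1] with k hk
      exact ι₁_pos hk₀.2 hroot (Ioo_subset_Ico_self hk)
  set c := ι₂ (k₀ / 2)
  have hc : 0 < c := ι₂_pos ⟨by linarith [hk₀.1], by linarith [hk₀.2]⟩
  have hlim : Tendsto (fun k => c * (ι₁ k)⁻¹ ^ 3) (𝓝[<] k₀) atTop :=
    ((tendsto_pow_atTop three_ne_zero).comp
      (tendsto_inv_nhdsGT_zero.comp hι₁)).const_mul_atTop hc
  refine tendsto_atTop_mono' _ ?_ hlim
  filter_upwards [Ioo_mem_nhdsLT (half_lt_self hk₀.1)] with k hk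
  have hιk := ι₁_pos hk₀.2 hroot ⟨(half_pos hk₀.1).le.trans hk.1.le, hk.2⟩
  have hι₂k : c ≤ ι₂ k :=
    strictMonoOn_ι₂.monotoneOn ⟨(half_pos hk₀.1).le, by linarith [hk₀.2]⟩
    ⟨(half_pos hk₀.1).le.trans hk.1.le, hk.2.trans hk₀.2⟩ hk.1.le
  calc c * (ι₁ k)⁻¹ ^ 3 = c / ι₁ k ^ 3 := by rw [inv_pow, div_eq_mul_inv]
    _ ≤ ι₂ k / ι₁ k ^ 3 := by gcongr
    _ ≤ ellipticRatio k := le_add_of_nonneg_left (by positivity)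

lemma bijOn_ellipticRatio : BijOn ellipticRatio (Ioo 0 k₀) (Ioi 0) :=
  bijOn_Ioo_Ioi_of_tendsto hk₀.1
    ((continuousOn_ellipticRatio hk₀ hroot).mono Ioo_subset_Ico_self)
    (strictMonoOn_ellipticRatio hk₀ hroot) (tendsto_ellipticRatio_nhdsGT_zero hk₀ hroot)
    (tendsto_ellipticRatio_nhdsLT hk₀ hroot)

end root

/-- The map `Φ(k, σ) = (4ι₁(k)/σ, (8/(3σ³))(k²ι₁(k) + ι₂(k)))` is a bijection from
`(0, k₀) × (0, +∞)` onto `(0, +∞) × (0, +∞)`. -/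
theorem Phi_bijOn (k₀ : ℝ) (hk₀ : k₀ ∈ Set.Ioo (0:ℝ) 1)
    (hroot : 2 * E k₀ - K k₀ = 0) :
    Set.BijOn
      (fun q : ℝ × ℝ =>
        (4 * ι₁ q.1 / q.2, 8 / (3 * q.2^3) * (q.1^2 * ι₁ q.1 + ι₂ q.1)))
      (Set.Ioo 0 k₀ ×ˢ Set.Ioi 0) (Set.Ioi 0 ×ˢ Set.Ioi 0) := by
  have hι₁ : ∀ k ∈ Ioo 0 k₀, 0 < ι₁ k := fun k hk =>
    ι₁_pos hk₀.2 hroot (Ioo_subset_Ico_self hk)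
  have hratio : BijOn (fun k => 8 / 3 * (k^2 * ι₁ k + ι₂ k) / (4 * ι₁ k) ^ 3)
      (Ioo 0 k₀) (Ioi 0) :=
    (bijOn_const_mul_Ioi (bijOn_ellipticRatio hk₀ hroot) (by norm_num : (0:ℝ) < 1 / 24)).congr
      fun k hk => by
        have := (hι₁ k hk).ne'
        simp only [ellipticRatio]
        field_simp
        ring
  exact (bijOn_div_div_pow_three (fun k hk => by linarith [hι₁ k hk]) hratio).congr
    fun q _ => Prod.ext rfl (by ring)
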